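/- arXiv:2005.07556 — 2 statements merged into one kernel-verified Lean document; each statement's English description precedes it below -/
import Mathlib

section
/- For any strict row contraction X = (X₁,…,X_d) of n×n complex matrices, P_X − Σᵢ₌₁^d (Xᵢᵀ ⊗ I_n)·P_X·(conj(Xᵢ) ⊗ I_n) = 𝔠_n, where 𝔠_n is the Choi matrix. -/
/-!
Common definitions: the ψ-involution, `vec`, the elementary Pick matrix, the Choi matrix,
Kronecker-product helpers with right-associated index types, the boomerang matrices, the
commutation matrix, and the Moore–Penrose predicate.
-/

open Matrix Filter
open scoped Kronecker Matrix.Norms.L2Operator ComplexOrder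

noncomputable section

/-- Square `n × n` complex matrices. -/
abbrev Mat (n : ℕ) := Matrix (Fin n) (Fin n) ℂ

/-- Entrywise complex conjugate of a matrix. -/
def conjM {m k : Type*} (A : Matrix m k ℂ) : Matrix m k ℂ := A.map (starRingEnd ℂ)

/-- `vec A` stacks the columns of `A`: the slot `(j, i)` (column `j`, row `i`) holds `A i j`. -/
def vecM (n : ℕ) (A : Mat n) : Matrix (Fin n × Fin n) Unit ℂ := Matrix.of fun p _ => A p.2 p.1

/-- The `ψ`-involution on `M_{n²}(ℂ)`: the linear map determined on matrix units by
`ψ(E_{ij} ⊗ E_{kℓ}) = E_{ℓj} ⊗ E_{ki}`, equivalently `ψ(A ⊗ B) = vec(B)·vec(A)ᵀ`. -/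
def psi (n : ℕ) (U : Matrix (Fin n × Fin n) (Fin n × Fin n) ℂ) :
    Matrix (Fin n × Fin n) (Fin n × Fin n) ℂ :=
  Matrix.of fun p q => U (q.2, p.2) (q.1, p.1)

/-- `X` is a strict row contraction: `‖Σᵢ Xᵢ Xᵢ*‖ < 1` in the L² operator norm. -/
def StrictRowContraction {n : ℕ} {ι : Type*} [Fintype ι] (X : ι → Mat n) : Prop :=
  ‖∑ i, X i * (X i)ᴴ‖ < 1

/-- The elementary Pick matrix `P_X = ψ((I_{n²} − Σᵢ conj(Xᵢ) ⊗ Xᵢ)⁻¹)`. -/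
def pick {n : ℕ} {ι : Type*} [Fintype ι] (X : ι → Mat n) :
    Matrix (Fin n × Fin n) (Fin n × Fin n) ℂ :=
  psi n ((1 - ∑ i, conjM (X i) ⊗ₖ X i)⁻¹)

/-- The Choi matrix `𝔠_n = Σ_{i,j} E_{ij} ⊗ E_{ij} ∈ M_{n²}(ℂ)`. -/
def choiM (n : ℕ) : Matrix (Fin n × Fin n) (Fin n × Fin n) ℂ :=
  ∑ i : Fin n, ∑ j : Fin n, single i j (1 : ℂ) ⊗ₖ single i j (1 : ℂ)

/-- `X^w = X_{i₁} ⋯ X_{i_k}` for a word `w = i₁⋯i_k` in the free monoid. -/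
def wordProd {n : ℕ} {ι : Type*} (X : ι → Mat n) (w : List ι) : Mat n := (w.map X).prod

/-- Kronecker product `A ⊗ C` where `A` carries a product index, with the resulting
index types flattened right-associatively (`(a × b) × c ↦ a × (b × c)`). -/
def krA {a b c a' b' c' : Type*} (A : Matrix (a × b) (a' × b') ℂ) (C : Matrix c c' ℂ) :
    Matrix (a × b × c) (a' × b' × c') ℂ :=
  Matrix.of fun p q => A (p.1, p.2.1) (q.1, q.2.1) * C p.2.2 q.2.2

/-- Kronecker product `M ⊗ C` where `M` carries a triple product index, flattened
right-associatively. -/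
def krT {a b c e a' b' c' e' : Type*} (M : Matrix (a × b × c) (a' × b' × c') ℂ)
    (C : Matrix e e' ℂ) : Matrix (a × b × c × e) (a' × b' × c' × e') ℂ :=
  Matrix.of fun p q => M (p.1, p.2.1, p.2.2.1) (q.1, q.2.1, q.2.2.1) * C p.2.2.2 q.2.2.2

/-- Triple Kronecker product `A ⊗ B ⊗ C` with right-associated index types. -/
def kr3 {a b c a' b' c' : Type*} (A : Matrix a a' ℂ) (B : Matrix b b' ℂ) (C : Matrix c c' ℂ) :
    Matrix (a × b × c) (a' × b' × c') ℂ :=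
  Matrix.of fun p q => A p.1 q.1 * B p.2.1 q.2.1 * C p.2.2 q.2.2

/-- The boomerang matrix `B̆ = Σ_{i,j} e_i ⊗ e_j ⊗ E_{ij} ∈ M_{n³×n}(ℂ)`:
its entry at row `(i, j, k)`, column `ℓ` is `δ_{k i} δ_{ℓ j}`. -/
def boom (n : ℕ) : Matrix (Fin n × Fin n × Fin n) (Fin n) ℂ :=
  Matrix.of fun p l => if p.2.2 = p.1 ∧ l = p.2.1 then 1 else 0

/-- The commutation (permutation) matrix `Q_{n,r}`, satisfying
`Q_{n,r} (U ⊗ V) Q_{n,r}ᵀ = V ⊗ U` for `U ∈ M_n`, `V ∈ M_r`. -/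
def commMat (n r : ℕ) : Matrix (Fin r × Fin n) (Fin n × Fin r) ℂ :=
  Matrix.of fun p q => if p.2 = q.1 ∧ p.1 = q.2 then 1 else 0

/-- `Σ_{i,j} e_i ⊗ e_j ⊗ I_r ⊗ E_{ij}`: its entry at row `(i, j, a, k)`, column `(b, ℓ)`
is `δ_{k i} δ_{ℓ j} δ_{a b}`. -/
def preBoom (n r : ℕ) : Matrix (Fin n × Fin n × Fin r × Fin n) (Fin r × Fin n) ℂ :=
  Matrix.of fun p q => if p.2.2.2 = p.1 ∧ q.2 = p.2.1 ∧ p.2.2.1 = q.1 then 1 else 0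

/-- The ampliated boomerang matrix `B̆_r = (Σ_{i,j} e_i ⊗ e_j ⊗ I_r ⊗ E_{ij}) · Q_{n,r}`. -/
def boomAmp (n r : ℕ) : Matrix (Fin n × Fin n × Fin r × Fin n) (Fin n × Fin r) ℂ :=
  preBoom n r * commMat n r

/-- `B` is the Moore–Penrose pseudoinverse of `A` (the four Penrose conditions). -/
structure IsMoorePenroseInv {m k : Type*} [Fintype m] [Fintype k]
    (A : Matrix m k ℂ) (B : Matrix k m ℂ) : Prop where
  mul_inv_mul : A * B * A = A
  inv_mul_inv : B * A * B = B
  hermitian_mul_inv : (A * B)ᴴ = A * B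
  hermitian_inv_mul : (B * A)ᴴ = B * A


/-!
The map `Φ(Y) = Σᵢ Xᵢ Y Xᵢ*`, whose matrix in the `vec` basis is `T = Σᵢ conj(Xᵢ) ⊗ Xᵢ`,
satisfies `‖Φ(Y)‖ ≤ ‖Σᵢ XᵢXᵢ*‖ ‖Y‖ < ‖Y‖` for `Y ≠ 0`, so `1 - T` is invertible. The
`ψ`-involution turns conjugation by `Xᵢᵀ ⊗ 1` and `conj(Xᵢ) ⊗ 1` into right multiplication by
`conj(Xᵢ) ⊗ Xᵢ`, so the left-hand side is `ψ((1 - T)⁻¹ (1 - T)) = ψ(1)`, the Choi matrix.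
-/

open scoped MatrixOrder

theorem norm_one_kronecker_le {l m : Type*} [Fintype l] [DecidableEq l] [Fintype m]
    [DecidableEq m] (Y : Matrix m m ℂ) : ‖(1 : Matrix l l ℂ) ⊗ₖ Y‖ ≤ ‖Y‖ := by
  have hle : star Y * Y ≤ algebraMap ℝ (Matrix m m ℂ) (‖Y‖ ^ 2) :=
    CStarAlgebra.star_mul_le_algebraMap_norm_sq
  have hkle : (1 : Matrix l l ℂ) ⊗ₖ (star Y * Y) ≤
      algebraMap ℝ (Matrix (l × m) (l × m) ℂ) (‖Y‖ ^ 2) := by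
    rw [Algebra.algebraMap_eq_smul_one] at hle ⊢
    rw [Matrix.le_iff]
    convert (PosSemidef.one (n := l)).kronecker (Matrix.le_iff.1 hle) using 1
    ext ⟨a, b⟩ ⟨c, e⟩
    by_cases a = c <;> simp_all [one_apply, mul_sub]
  have hpos : 0 ≤ (1 : Matrix l l ℂ) ⊗ₖ (star Y * Y) :=
    (PosSemidef.one.kronecker (posSemidef_conjTranspose_mul_self Y)).nonneg
  have hsq : ‖(1 : Matrix l l ℂ) ⊗ₖ Y‖ ^ 2 ≤ ‖Y‖ ^ 2 := by
    rw [sq, ← l2_opNorm_conjTranspose_mul_self, conjTranspose_kronecker, conjTranspose_one,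
      ← mul_kronecker_mul, one_mul, ← star_eq_conjTranspose]
    exact (CStarAlgebra.norm_le_iff_le_algebraMap _ (sq_nonneg _) hpos).2 hkle
  exact (pow_le_pow_iff_left₀ (norm_nonneg _) (norm_nonneg _) two_ne_zero).1 hsq

theorem norm_sum_mul_mul_conjTranspose_le {ι m : Type*} [Fintype ι] [Fintype m]
    [DecidableEq m] (X : ι → Matrix m m ℂ) (Y : Matrix m m ℂ) :
    ‖∑ i, X i * Y * (X i)ᴴ‖ ≤ ‖∑ i, X i * (X i)ᴴ‖ * ‖Y‖ := by
  classical
  -- the row `R = [X₁ ⋯ X_d]` factors the sum as `R (1 ⊗ Y) R*`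
  let R : Matrix m (ι × m) ℂ := of fun a p => X p.1 a p.2
  have hR : R * Rᴴ = ∑ i, X i * (X i)ᴴ := by
    ext a b
    simp [R, mul_apply, Fintype.sum_prod_type, Matrix.sum_apply]
  have hRY : R * ((1 : Matrix ι ι ℂ) ⊗ₖ Y) * Rᴴ = ∑ i, X i * Y * (X i)ᴴ := by
    ext a b
    simp [R, mul_apply, Fintype.sum_prod_type, Matrix.sum_apply, one_apply, ite_mul,
      Finset.sum_mul]
  have hnormR : ‖R * Rᴴ‖ = ‖R‖ * ‖R‖ := by
    simpa [l2_opNorm_conjTranspose] using l2_opNorm_conjTranspose_mul_self Rᴴ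
  calc ‖∑ i, X i * Y * (X i)ᴴ‖ = ‖R * ((1 : Matrix ι ι ℂ) ⊗ₖ Y) * Rᴴ‖ := by rw [hRY]
    _ ≤ ‖R‖ * ‖(1 : Matrix ι ι ℂ) ⊗ₖ Y‖ * ‖Rᴴ‖ :=
      (l2_opNorm_mul _ _).trans (mul_le_mul_of_nonneg_right (l2_opNorm_mul _ _) (norm_nonneg _))
    _ ≤ ‖R‖ * ‖Y‖ * ‖R‖ := by
      rw [l2_opNorm_conjTranspose]
      gcongr
      exact norm_one_kronecker_le Y
    _ = ‖∑ i, X i * (X i)ᴴ‖ * ‖Y‖ := by rw [← hR, hnormR]; ring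

theorem conjM_kronecker_mulVec {l l' m m' : Type*} [Fintype l'] [Fintype m']
    (A : Matrix l l' ℂ) (B : Matrix m m' ℂ) (Y : Matrix m' l' ℂ) :
    (conjM A ⊗ₖ B) *ᵥ (fun p => Y p.2 p.1) = fun p => (B * Y * Aᴴ) p.2 p.1 := by
  ext ⟨a, b⟩
  simp only [mulVec, dotProduct, Fintype.sum_prod_type, kroneckerMap_apply, conjM, map_apply,
    mul_apply, conjTranspose_apply, Finset.sum_mul, starRingEnd_apply]
  exact Finset.sum_congr rfl fun _ _ => Finset.sum_congr rfl fun _ _ => by ring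

theorem StrictRowContraction.isUnit_det_one_sub {ι : Type*} [Fintype ι] {n : ℕ} {X : ι → Mat n}
    (hX : StrictRowContraction X) : IsUnit (1 - ∑ i, conjM (X i) ⊗ₖ X i).det := by
  rw [isUnit_iff_ne_zero]
  intro hdet
  obtain ⟨v, hv0, hv⟩ := exists_mulVec_eq_zero_iff.2 hdet
  set Y : Mat n := of fun i j => v (j, i)
  have hvY : v = fun p => Y p.2 p.1 := rfl
  have hfix : ∑ i, X i * Y * (X i)ᴴ = Y := by
    rw [sub_mulVec, one_mulVec, sub_eq_zero, sum_mulVec, hvY] at hv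
    simp only [conjM_kronecker_mulVec] at hv
    ext a b
    simpa [Matrix.sum_apply] using (congrFun hv (b, a)).symm
  have hY : Y = 0 := by
    have h := norm_sum_mul_mul_conjTranspose_le X Y
    rw [hfix] at h
    have hX' : ‖∑ i, X i * (X i)ᴴ‖ < 1 := hX
    exact norm_le_zero_iff.1 (by nlinarith [norm_nonneg Y])
  exact hv0 (funext fun p => congrFun (congrFun hY p.2) p.1)

section Psi

variable {n : ℕ}

theorem psi_sub (U V : Matrix (Fin n × Fin n) (Fin n × Fin n) ℂ) :
    psi n (U - V) = psi n U - psi n V := rfl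

theorem psi_sum {ι : Type*} (s : Finset ι) (U : ι → Matrix (Fin n × Fin n) (Fin n × Fin n) ℂ) :
    psi n (∑ i ∈ s, U i) = ∑ i ∈ s, psi n (U i) := by
  ext p q
  simp [psi, Matrix.sum_apply]

theorem psi_one : psi n 1 = choiM n := by
  ext ⟨a, b⟩ ⟨c, e⟩
  simp only [psi, one_apply, Prod.mk.injEq, ite_and, of_apply, choiM, Matrix.sum_apply,
    kroneckerMap_apply, single_apply, mul_ite, mul_one, mul_zero, Finset.sum_ite_irrel,
    Finset.sum_ite_eq', Finset.mem_univ, ↓reduceIte, Finset.sum_const_zero]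
  split_ifs <;> rfl

theorem kronecker_one_mul_psi_mul (U : Matrix (Fin n × Fin n) (Fin n × Fin n) ℂ) (C D : Mat n) :
    (C ⊗ₖ (1 : Mat n)) * psi n U * (D ⊗ₖ (1 : Mat n)) = psi n (U * (D ⊗ₖ Cᵀ)) := by
  ext p q
  simp only [psi, mul_apply, of_apply, kroneckerMap_apply, one_apply, transpose_apply,
    Fintype.sum_prod_type, mul_ite, mul_zero, mul_one, ite_mul, zero_mul, Finset.sum_ite_eq,
    Finset.sum_ite_eq', Finset.mem_univ, if_true, Finset.sum_mul]
  exact Finset.sum_congr rfl fun _ _ => Finset.sum_congr rfl fun _ _ => by ring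

end Psi

/-- For any strict row contraction `X`,
`P_X − Σᵢ (Xᵢᵀ ⊗ I_n)·P_X·(conj(Xᵢ) ⊗ I_n) = 𝔠_n`, the Choi matrix. -/
theorem pick_stein_identity {n d : ℕ} (X : Fin d → Mat n)
    (hX : StrictRowContraction X) :
    pick X - ∑ i, ((X i)ᵀ ⊗ₖ (1 : Mat n)) * pick X * (conjM (X i) ⊗ₖ (1 : Mat n)) =
      choiM n := by
  set T := 1 - ∑ i, conjM (X i) ⊗ₖ X i
  have hpick : pick X = psi n T⁻¹ := rfl
  calc pick X - ∑ i, ((X i)ᵀ ⊗ₖ (1 : Mat n)) * pick X * (conjM (X i) ⊗ₖ (1 : Mat n))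
      = psi n T⁻¹ - psi n (T⁻¹ * ∑ i, conjM (X i) ⊗ₖ X i) := by
        simp only [hpick, kronecker_one_mul_psi_mul, transpose_transpose, Finset.mul_sum, psi_sum]
    _ = psi n (T⁻¹ * T) := by rw [← psi_sub, Matrix.mul_sub, Matrix.mul_one]
    _ = choiM n := by rw [nonsing_inv_mul _ hX.isUnit_det_one_sub, psi_one]
end
end

section
/- Let n, s ≥ 1, A ∈ M_{n²}(ℂ), C ∈ M_n(ℂ), and J, K ∈ M_{ns}(ℂ). Then B̆_sᵀ·((I_n ⊗ J)·(A ⊗ I_s)·(I_n ⊗ K) ⊗ C)·B̆_s = J·(B̆_sᵀ·(A ⊗ I_s ⊗ C)·B̆_s)·K, where B̆_s denotes the ampliated boomerang matrix. -/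
/-!
Common definitions: the ψ-involution, `vec`, the elementary Pick matrix, the Choi matrix,
Kronecker-product helpers with right-associated index types, the boomerang matrices, the
commutation matrix, and the Moore–Penrose predicate.
-/

open Matrix Filter
open scoped Kronecker Matrix.Norms.L2Operator ComplexOrder

noncomputable section

/-!
Sandwiching by `B̆_s` is a partial trace: `(B̆_sᵀ X B̆_s)_{(j,a),(ℓ,b)} = Σ_{i,k} X_{(i,j,a,i),(k,ℓ,b,k)}`,
so only the first and last `n`-indices of `X` are contracted, while the middle `(n, s)`-indices
become the row and column indices of the result. The factors `I_n ⊗ J` and `I_n ⊗ K` act on those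
middle indices only, hence they pass through the contraction as left and right multiplication
by `J` and `K`.
-/

section OneKronecker

variable {R m ι α : Type*} [CommSemiring R] [Fintype m] [DecidableEq m] [Fintype ι]

lemma one_kronecker_mul_apply (J : Matrix ι ι R) (M : Matrix (m × ι) α R) (i : m) (y : ι)
    (q : α) : ((1 : Matrix m m R) ⊗ₖ J * M) (i, y) q = ∑ x, J y x * M (i, x) q := by
  simp [mul_apply, Fintype.sum_prod_type, one_apply]

lemma mul_one_kronecker_apply (K : Matrix ι ι R) (M : Matrix α (m × ι) R) (p : α) (i : m)
    (y : ι) : (M * (1 : Matrix m m R) ⊗ₖ K) p (i, y) = ∑ x, M p (i, x) * K x y := by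
  simp [mul_apply, Fintype.sum_prod_type, one_apply]

end OneKronecker

section AmpliatedBoomerang

variable {n s : ℕ} {α : Type*}

lemma boomAmp_apply (p : Fin n × Fin n × Fin s × Fin n) (q : Fin n × Fin s) :
    boomAmp n s p q = if p.2.2.2 = p.1 ∧ q.1 = p.2.1 ∧ p.2.2.1 = q.2 then 1 else 0 := by
  simp [boomAmp, mul_apply, preBoom, commMat, Fintype.sum_prod_type, ite_and]

lemma transpose_boomAmp_mul_apply (M : Matrix (Fin n × Fin n × Fin s × Fin n) α ℂ)
    (q : Fin n × Fin s) (p : α) : ((boomAmp n s)ᵀ * M) q p = ∑ i, M (i, q.1, q.2, i) p := by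
  simp [mul_apply, boomAmp_apply, Fintype.sum_prod_type, ite_and]

lemma mul_boomAmp_apply (M : Matrix α (Fin n × Fin n × Fin s × Fin n) ℂ) (p : α)
    (q : Fin n × Fin s) : (M * boomAmp n s) p q = ∑ i, M p (i, q.1, q.2, i) := by
  simp [mul_apply, boomAmp_apply, Fintype.sum_prod_type, ite_and]

variable (M : Matrix (Fin n × Fin n × Fin s) (Fin n × Fin n × Fin s) ℂ) (C : Mat n)

lemma transpose_boomAmp_mul_krT_one_kronecker_mul (J : Matrix (Fin n × Fin s) (Fin n × Fin s) ℂ) :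
    (boomAmp n s)ᵀ * krT ((1 : Mat n) ⊗ₖ J * M) C = J * ((boomAmp n s)ᵀ * krT M C) := by
  ext q p
  rw [transpose_boomAmp_mul_apply, mul_apply]
  simp only [transpose_boomAmp_mul_apply, krT, of_apply, one_kronecker_mul_apply,
    Prod.mk.eta, Finset.sum_mul, Finset.mul_sum, mul_assoc]
  exact Finset.sum_comm

lemma krT_mul_one_kronecker_mul_boomAmp (K : Matrix (Fin n × Fin s) (Fin n × Fin s) ℂ) :
    krT (M * (1 : Mat n) ⊗ₖ K) C * boomAmp n s = krT M C * boomAmp n s * K := by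
  ext p q
  rw [mul_boomAmp_apply, mul_apply]
  simp only [mul_boomAmp_apply, krT, of_apply, mul_one_kronecker_apply, Prod.mk.eta,
    Finset.sum_mul]
  rw [Finset.sum_comm]
  exact Finset.sum_congr rfl fun _ _ => Finset.sum_congr rfl fun _ _ => mul_right_comm _ _ _

end AmpliatedBoomerang

theorem ampliated_boomerang_double_general {n s : ℕ}
    (A : Matrix (Fin n × Fin n) (Fin n × Fin n) ℂ) (C : Mat n)
    (J K : Matrix (Fin n × Fin s) (Fin n × Fin s) ℂ) :
    (boomAmp n s)ᵀ *
        krT (((1 : Mat n) ⊗ₖ J) * krA A (1 : Matrix (Fin s) (Fin s) ℂ) * ((1 : Mat n) ⊗ₖ K)) C *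
        boomAmp n s =
      J * ((boomAmp n s)ᵀ * krT (krA A (1 : Matrix (Fin s) (Fin s) ℂ)) C * boomAmp n s) * K := by
  rw [Matrix.mul_assoc ((1 : Mat n) ⊗ₖ J), transpose_boomAmp_mul_krT_one_kronecker_mul,
    Matrix.mul_assoc J, Matrix.mul_assoc (boomAmp n s)ᵀ, krT_mul_one_kronecker_mul_boomAmp]
  simp only [Matrix.mul_assoc]

/-- For `A ∈ M_{n²}(ℂ)`, `C ∈ M_n(ℂ)` and `J, K ∈ M_{ns}(ℂ)`,
`B̆_sᵀ·((I_n ⊗ J)·(A ⊗ I_s)·(I_n ⊗ K) ⊗ C)·B̆_s = J·(B̆_sᵀ·(A ⊗ I_s ⊗ C)·B̆_s)·K`. -/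
theorem ampliated_boomerang_double {n s : ℕ} (hn : 1 ≤ n) (hs : 1 ≤ s)
    (A : Matrix (Fin n × Fin n) (Fin n × Fin n) ℂ) (C : Mat n)
    (J K : Matrix (Fin n × Fin s) (Fin n × Fin s) ℂ) :
    (boomAmp n s)ᵀ *
        krT (((1 : Mat n) ⊗ₖ J) * krA A (1 : Matrix (Fin s) (Fin s) ℂ) * ((1 : Mat n) ⊗ₖ K)) C *
        boomAmp n s =
      J * ((boomAmp n s)ᵀ * krT (krA A (1 : Matrix (Fin s) (Fin s) ℂ)) C * boomAmp n s) * K :=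
  ampliated_boomerang_double_general A C J K
end
end
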